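/- Let (J, cl) be a realizable convex 4-geometry with outermost layer L₀, and let f and g be two realizations of (J, cl) inducing the same clockwise circular order on L₀, i.e. sign(f a, f b, f c) = sign(g a, g b, g c) for all distinct a, b, c ∈ L₀. Then f and g induce the same order type on all of J: sign(f a, f b, f c) = sign(g a, g b, g c) for all distinct a, b, c ∈ J. -/

import Mathlib

open Set

/-- Orientation sign of a triple of points in the plane: the sign of the determinant of
the matrix with columns `y - x` and `z - x`. -/
noncomputable def osign (x y z : Fin 2 → ℝ) : ℝ :=
  Real.sign ((y 0 - x 0) * (z 1 - x 1) - (y 1 - x 1) * (z 0 - x 0))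

/-- A planar point set is in general position if no three distinct points are collinear. -/
def GenPos (X : Set (Fin 2 → ℝ)) : Prop :=
  ∀ x ∈ X, ∀ y ∈ X, ∀ z ∈ X, x ≠ y → y ≠ z → x ≠ z →
    ¬ Collinear ℝ ({x, y, z} : Set (Fin 2 → ℝ))

/-- A convex geometry on a finite set `J`: a closure operator satisfying the
anti-exchange axiom. -/
structure ConvexGeometry (J : Type) [Fintype J] where
  cl : Set J → Set J
  extensive : ∀ A : Set J, A ⊆ cl A
  mono : ∀ A B : Set J, A ⊆ B → cl A ⊆ cl B
  idem : ∀ A : Set J, cl (cl A) = cl A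
  antiExchange : ∀ A : Set J, cl A = A → ∀ x y : J, x ≠ y → x ∉ A → y ∉ A →
    x ∈ cl (A ∪ {y}) → y ∉ cl (A ∪ {x})

variable {J : Type} [Fintype J]

/-- A set is dependent if some element lies in the closure of the rest. -/
def ConvexGeometry.Dependent (G : ConvexGeometry J) (D : Set J) : Prop :=
  ∃ x ∈ D, x ∈ G.cl (D \ {x})

/-- A circuit is an inclusion-minimal dependent set. -/
def ConvexGeometry.IsCircuit (G : ConvexGeometry J) (C : Set J) : Prop :=
  G.Dependent C ∧ ∀ D ⊆ C, G.Dependent D → D = C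

/-- A convex 4-geometry: all circuits have exactly 4 elements. -/
def ConvexGeometry.Is4Geometry (G : ConvexGeometry J) : Prop :=
  ∀ C : Set J, G.IsCircuit C → C.ncard = 4

/-- `(T, a)` is a rooted triangle of `G` if `T ∪ {a}` is a circuit with root `a`. -/
def ConvexGeometry.RT (G : ConvexGeometry J) (T : Set J) (a : J) : Prop :=
  a ∉ T ∧ G.IsCircuit (insert a T) ∧ a ∈ G.cl T

/-- A realization of a convex geometry in the plane. -/
def IsRealization (G : ConvexGeometry J) (f : J → (Fin 2 → ℝ)) : Prop :=
  Function.Injective f ∧ GenPos (Set.range f) ∧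
    ∀ Y : Set J, f '' (G.cl Y) = convexHull ℝ (f '' Y) ∩ Set.range f

/-- `G.rest n` is the set `Jₙ` remaining after removing the first `n` layers. -/
def ConvexGeometry.rest (G : ConvexGeometry J) : ℕ → Set J
  | 0 => Set.univ
  | n + 1 => {x ∈ G.rest n | x ∈ G.cl (G.rest n \ {x})}

/-- The `n`-th layer: the extreme points of the restricted geometry on `G.rest n`. -/
def ConvexGeometry.layer (G : ConvexGeometry J) (n : ℕ) : Set J :=
  {x ∈ G.rest n | x ∉ G.cl (G.rest n \ {x})}

/-- The outermost layer (extreme points) of a convex geometry. -/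
def ConvexGeometry.L0 (G : ConvexGeometry J) : Set J :=
  {x : J | x ∉ G.cl (Set.univ \ {x})}

/-!
Induct on `K ⊆ J` by removing a non-extreme point `j` of `K`. By anti-exchange the extreme
points of `K \ {j}` are extreme in `K`, so both realizations agree on the triples of `K \ {j}`,
and it remains to see that `j` lies on the same side of every line `ab`, `a, b ∈ K \ {j}`.
If `a ∈ cl {j, b, t}` or `b ∈ cl {j, a, t}` for some other `t ∈ K`, then in both realizations
`j` and `t` lie on opposite sides of `ab`. Otherwise, for every `t` on the other side the
segment `[j, t]` crosses the segment `[a, b]`, and a separating line shows that `j` lies in the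
closure of `a`, `b` and the points on its own side; this closure relation holds in the second
realization too and pins `j` to the same side there.
-/

noncomputable def orientDet (x y z : Fin 2 → ℝ) : ℝ :=
  (y 0 - x 0) * (z 1 - x 1) - (y 1 - x 1) * (z 0 - x 0)

lemma osign_eq_sign_orientDet (x y z : Fin 2 → ℝ) :
    osign x y z = Real.sign (orientDet x y z) := rfl

@[simp] lemma orientDet_self_left (x y : Fin 2 → ℝ) : orientDet x y x = 0 := by
  unfold orientDet; ring

@[simp] lemma orientDet_self_right (x y : Fin 2 → ℝ) : orientDet x y y = 0 := by
  unfold orientDet; ring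

lemma orientDet_swap (x y z : Fin 2 → ℝ) : orientDet y x z = -orientDet x y z := by
  unfold orientDet; ring

lemma orientDet_cycle (x y z : Fin 2 → ℝ) : orientDet y z x = orientDet x y z := by
  unfold orientDet; ring

lemma osign_cycle (x y z : Fin 2 → ℝ) : osign y z x = osign x y z := by
  simp only [osign_eq_sign_orientDet, orientDet_cycle]

lemma orientDet_add_smul (x y p q : Fin 2 → ℝ) {α β : ℝ} (h : α + β = 1) :
    orientDet x y (α • p + β • q) = α * orientDet x y p + β * orientDet x y q := by
  obtain rfl : α = 1 - β := by linarith
  simp only [orientDet, Pi.add_apply, Pi.smul_apply, smul_eq_mul]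
  ring

lemma convex_setOf_nonneg_mul_orientDet (x y : Fin 2 → ℝ) (c : ℝ) :
    Convex ℝ {p | 0 ≤ c * orientDet x y p} := by
  intro p hp q hq α β hα hβ hαβ
  simp only [Set.mem_ofPred_eq, orientDet_add_smul x y p q hαβ] at hp hq ⊢
  nlinarith [mul_nonneg hα hp, mul_nonneg hβ hq]

lemma nonneg_mul_orientDet_of_mem_convexHull {x y p : Fin 2 → ℝ} {c : ℝ}
    {S : Set (Fin 2 → ℝ)} (hp : p ∈ convexHull ℝ S) (hS : ∀ q ∈ S, 0 ≤ c * orientDet x y q) :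
    0 ≤ c * orientDet x y p :=
  convexHull_min hS (convex_setOf_nonneg_mul_orientDet x y c) hp

lemma collinear_of_orientDet_eq_zero {p q r : Fin 2 → ℝ} (h : orientDet p q r = 0) :
    Collinear ℝ {p, q, r} := by
  rcases eq_or_ne p q with rfl | hpq
  · simpa using collinear_pair ℝ p r
  suffices r ∈ line[ℝ, p, q] by
    have := collinear_insert_of_mem_affineSpan_pair this
    rwa [Set.insert_comm, Set.pair_comm] at this
  have hpq' : q 0 - p 0 ≠ 0 ∨ q 1 - p 1 ≠ 0 := by
    by_contra! h'
    exact hpq (funext fun i => by fin_cases i <;> simp <;> linarith [h'.1, h'.2])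
  unfold orientDet at h
  rcases hpq' with h0 | h1
  · convert AffineMap.lineMap_mem_affineSpan_pair ((r 0 - p 0) / (q 0 - p 0)) p q
    funext i; fin_cases i <;> simp [AffineMap.lineMap_apply_module'] <;> field_simp <;> linarith
  · convert AffineMap.lineMap_mem_affineSpan_pair ((r 1 - p 1) / (q 1 - p 1)) p q
    funext i; fin_cases i <;> simp [AffineMap.lineMap_apply_module'] <;> field_simp <;> linarith

lemma exists_mem_segment_orientDet_eq_zero {x y p q : Fin 2 → ℝ}
    (h : orientDet x y p * orientDet x y q ≤ 0) :
    ∃ m ∈ segment ℝ p q, orientDet x y m = 0 := by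
  set u := orientDet x y p
  set v := orientDet x y q
  rcases eq_or_ne u v with huv | huv
  · exact ⟨p, left_mem_segment ℝ p q, by rw [← huv] at h; nlinarith⟩
  have huv' : u - v ≠ 0 := sub_ne_zero.2 huv
  obtain ⟨hα, hβ⟩ : 0 ≤ -v / (u - v) ∧ 0 ≤ u / (u - v) := by
    rcases huv.lt_or_gt with hlt | hlt
    · exact ⟨div_nonneg_of_nonpos (by nlinarith) (by linarith),
        div_nonneg_of_nonpos (by nlinarith) (by linarith)⟩
    · exact ⟨div_nonneg (by nlinarith) (by linarith), div_nonneg (by nlinarith) (by linarith)⟩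
  have hαβ : -v / (u - v) + u / (u - v) = 1 := by field_simp; ring
  refine ⟨_, ⟨_, _, hα, hβ, hαβ, rfl⟩, ?_⟩
  rw [orientDet_add_smul x y p q hαβ]
  field_simp
  ring

lemma segment_inter_nonempty_or_mem_convexHull {x y p q : Fin 2 → ℝ}
    (h : orientDet x y p * orientDet x y q ≤ 0) :
    (segment ℝ p q ∩ segment ℝ x y).Nonempty ∨
      x ∈ convexHull ℝ {p, y, q} ∨ y ∈ convexHull ℝ {p, x, q} := by
  obtain ⟨m, hm, hm0⟩ := exists_mem_segment_orientDet_eq_zero h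
  have hm' : ∀ z, m ∈ convexHull ℝ {p, z, q} :=
    fun z => segment_subset_convexHull (by simp) (by simp) hm
  have hvertex : ∀ z, z ∈ convexHull ℝ {p, z, q} := fun z => subset_convexHull ℝ _ (by simp)
  rcases (collinear_of_orientDet_eq_zero hm0).wbtw_or_wbtw_or_wbtw with hy | hm'' | hx
  · exact Or.inr (Or.inr ((convex_convexHull ℝ _).segment_subset (hvertex x) (hm' x)
      (mem_segment_iff_wbtw.2 hy)))
  · exact Or.inl ⟨m, hm, segment_symm ℝ y x ▸ mem_segment_iff_wbtw.2 hm''⟩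
  · exact Or.inr (Or.inl ((convex_convexHull ℝ _).segment_subset (hm' y) (hvertex y)
      (mem_segment_iff_wbtw.2 hx)))

lemma orientDet_mul_nonpos_of_mem_convexHull {x y p q : Fin 2 → ℝ} (hxy : x ≠ y)
    (hx : x ∈ convexHull ℝ {p, y, q}) : orientDet x y p * orientDet x y q ≤ 0 := by
  rw [Set.insert_comm, convexHull_insert (by simp), convexHull_pair, mem_convexJoin] at hx
  obtain ⟨y', hy', m, ⟨α, β, hα, hβ, hαβ, rfl⟩, hxm⟩ := hx
  rw [Set.mem_singleton_iff.1 hy'] at hxm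
  have hm0 : orientDet x y (α • p + β • q) = 0 := by
    obtain ⟨γ, δ, -, -, hγδ, hxe⟩ := hxm
    have h := orientDet_add_smul x y y (α • p + β • q) hγδ
    rw [hxe, orientDet_self_left, orientDet_self_right, mul_zero, zero_add, eq_comm,
      mul_eq_zero] at h
    refine h.resolve_left fun hδ => hxy ?_
    rw [← hxe, hδ, (by linarith : γ = 1)]
    simp
  rw [orientDet_add_smul x y p q hαβ] at hm0
  set u := orientDet x y p
  set v := orientDet x y q
  have huv : u * v = -(α * u ^ 2 + β * v ^ 2) := by
    linear_combination (u + v) * hm0 - u * v * hαβ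
  rw [huv, neg_nonpos]
  positivity

theorem mem_of_mem_convexHull_of_segment_inter_nonempty {E : Type*} [AddCommGroup E]
    [Module ℝ E] [TopologicalSpace E] [IsTopologicalAddGroup E] [ContinuousSMul ℝ E]
    [LocallyConvexSpace ℝ E] {C X : Set E} {x : E} (hC : Convex ℝ C) (hCc : IsClosed C)
    (hx : x ∈ convexHull ℝ X) (hX : ∀ t ∈ X, (segment ℝ x t ∩ C).Nonempty) : x ∈ C := by
  by_contra hxC
  obtain ⟨φ, u, hφC, huφ⟩ := geometric_hahn_banach_closed_point hC hCc hxC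
  have hXφ : X ⊆ {y | φ y < φ x} := by
    intro t ht
    obtain ⟨_, ⟨α, β, hα, hβ, hαβ, rfl⟩, hc⟩ := hX t ht
    have hφc := hφC _ hc
    simp only [map_add, map_smul, smul_eq_mul] at hφc
    change φ t < φ x
    by_contra! h
    have hφx : α * φ x + β * φ x = φ x := by rw [← add_mul, hαβ, one_mul]
    linarith [mul_le_mul_of_nonneg_left h hβ]
  exact lt_irrefl (φ x) (convexHull_min hXφ (convex_halfSpace_lt φ.toLinearMap.isLinear _) hx)

namespace Real

lemma sign_eq_neg_sign_of_mul_nonpos {x y : ℝ} (h : x * y ≤ 0) (hx : x ≠ 0) (hy : y ≠ 0) :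
    sign x = -sign y := by
  rcases hx.lt_or_gt with hx | hx <;> rcases hy.lt_or_gt with hy | hy <;>
    simp [sign_of_neg, sign_of_pos, *] <;> nlinarith

lemma mul_nonpos_of_sign_ne {x y : ℝ} (h : sign x ≠ sign y) : x * y ≤ 0 := by
  by_contra! hxy
  rcases mul_pos_iff.1 hxy with ⟨hx, hy⟩ | ⟨hx, hy⟩
  · exact h (by rw [sign_of_pos hx, sign_of_pos hy])
  · exact h (by rw [sign_of_neg hx, sign_of_neg hy])

lemma sign_eq_of_nonneg_sign_mul {x y : ℝ} (h : 0 ≤ sign y * x) (hx : x ≠ 0) (hy : y ≠ 0) :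
    sign x = sign y := by
  rcases hx.lt_or_gt with hx | hx <;> rcases hy.lt_or_gt with hy | hy <;>
    simp [sign_of_neg, sign_of_pos, *] at h ⊢ <;> linarith

end Real

section

variable {ι : Type*}

def SameOrientationOn (f g : ι → Fin 2 → ℝ) (K : Set ι) : Prop :=
  ∀ a ∈ K, ∀ b ∈ K, ∀ c ∈ K, a ≠ b → b ≠ c → a ≠ c →
    osign (f a) (f b) (f c) = osign (g a) (g b) (g c)

variable {f g : ι → Fin 2 → ℝ} {K K' : Set ι}

lemma SameOrientationOn.mono (h : SameOrientationOn f g K) (hK : K' ⊆ K) :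
    SameOrientationOn f g K' :=
  fun a ha b hb c hc => h a (hK ha) b (hK hb) c (hK hc)

lemma SameOrientationOn.insert (h : SameOrientationOn f g K) {j : ι}
    (hj : ∀ a ∈ K, ∀ b ∈ K, a ≠ b → osign (f a) (f b) (f j) = osign (g a) (g b) (g j)) :
    SameOrientationOn f g (insert j K) := by
  intro a ha b hb c hc hab hbc hac
  rcases eq_or_ne c j with rfl | hcj
  · exact hj a (ha.resolve_left hac) b (hb.resolve_left hbc) hab
  rcases eq_or_ne b j with rfl | hbj
  · rw [osign_cycle (f c), osign_cycle (g c)]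
    exact hj c (hc.resolve_left hcj) a (ha.resolve_left hab) hac.symm
  rcases eq_or_ne a j with rfl | haj
  · rw [← osign_cycle (f a), ← osign_cycle (g a)]
    exact hj b (hb.resolve_left hbj) c (hc.resolve_left hcj) hbc
  exact h a (ha.resolve_left haj) b (hb.resolve_left hbj) c (hc.resolve_left hcj) hab hbc hac

end

namespace ConvexGeometry

def extremePoints (G : ConvexGeometry J) (K : Set J) : Set J :=
  {x ∈ K | x ∉ G.cl (K \ {x})}

lemma extremePoints_sdiff_singleton_subset (G : ConvexGeometry J) {K : Set J} {j : J}
    (hj : j ∈ G.cl (K \ {j})) : G.extremePoints (K \ {j}) ⊆ G.extremePoints K := by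
  rintro x ⟨⟨hxK, hxj⟩, hx⟩
  refine ⟨hxK, fun hxcl => hx ?_⟩
  set A := G.cl ((K \ {j}) \ {x})
  by_contra hxA
  have hjA : j ∉ A := fun hjA => hxA <| (G.idem _).subset <| G.mono _ _ (by
    rintro w ⟨hwK, hwx⟩
    by_cases hwj : w = j
    · rw [hwj]; exact hjA
    · exact G.extensive _ ⟨⟨hwK, hwj⟩, hwx⟩) hxcl
  refine G.antiExchange A (G.idem _) x j hxj hxA hjA (G.mono _ _ ?_ hxcl) (G.mono _ _ ?_ hj)
  · rintro w ⟨hwK, hwx⟩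
    by_cases hwj : w = j
    · exact Or.inr hwj
    · exact Or.inl (G.extensive _ ⟨⟨hwK, hwj⟩, hwx⟩)
  · rintro w ⟨hwK, hwj⟩
    by_cases hwx : w = x
    · exact Or.inr hwx
    · exact Or.inl (G.extensive _ ⟨⟨hwK, hwj⟩, hwx⟩)

end ConvexGeometry

namespace IsRealization

variable {G : ConvexGeometry J} {f : J → Fin 2 → ℝ}

lemma mem_convexHull_image_iff (hf : IsRealization G f) {Y : Set J} {x : J} :
    f x ∈ convexHull ℝ (f '' Y) ↔ x ∈ G.cl Y := by
  rw [← hf.1.mem_set_image, hf.2.2 Y, Set.mem_inter_iff, and_iff_left (Set.mem_range_self x)]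

lemma mem_convexHull_triple_iff (hf : IsRealization G f) {x p q r : J} :
    f x ∈ convexHull ℝ {f p, f q, f r} ↔ x ∈ G.cl {p, q, r} := by
  simpa [Set.image_insert_eq] using hf.mem_convexHull_image_iff (Y := {p, q, r})

lemma orientDet_ne_zero (hf : IsRealization G f) {a b c : J} (hab : a ≠ b) (hbc : b ≠ c)
    (hac : a ≠ c) : orientDet (f a) (f b) (f c) ≠ 0 := fun h =>
  hf.2.1 _ ⟨a, rfl⟩ _ ⟨b, rfl⟩ _ ⟨c, rfl⟩ (hf.1.ne hab) (hf.1.ne hbc) (hf.1.ne hac)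
    (collinear_of_orientDet_eq_zero h)

lemma osign_eq_neg_of_mem_cl (hf : IsRealization G f) {a b j t : J} (hab : a ≠ b)
    (haj : a ≠ j) (hbj : b ≠ j) (hat : a ≠ t) (hbt : b ≠ t)
    (h : a ∈ G.cl {j, b, t} ∨ b ∈ G.cl {j, a, t}) :
    osign (f a) (f b) (f j) = -osign (f a) (f b) (f t) := by
  have hnonpos : orientDet (f a) (f b) (f j) * orientDet (f a) (f b) (f t) ≤ 0 := by
    rcases h with h | h
    · exact orientDet_mul_nonpos_of_mem_convexHull (hf.1.ne hab)
        (hf.mem_convexHull_triple_iff.2 h)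
    · have := orientDet_mul_nonpos_of_mem_convexHull (hf.1.ne hab.symm)
        (hf.mem_convexHull_triple_iff.2 h)
      rwa [orientDet_swap (f a) (f b), orientDet_swap (f a) (f b), neg_mul_neg] at this
  exact Real.sign_eq_neg_sign_of_mul_nonpos hnonpos (hf.orientDet_ne_zero hab hbj haj)
    (hf.orientDet_ne_zero hab hbt hat)

lemma mem_cl_sameSide (hf : IsRealization G f) {K : Set J} {a b j : J} (ha : a ∈ K)
    (hb : b ∈ K) (hj : j ∈ G.cl K)
    (hsep : ∀ t ∈ K, t ≠ a → t ≠ b → a ∉ G.cl {j, b, t} ∧ b ∉ G.cl {j, a, t}) :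
    j ∈ G.cl {x ∈ K | x = a ∨ x = b ∨ osign (f a) (f b) (f x) = osign (f a) (f b) (f j)} := by
  set H := {x ∈ K | x = a ∨ x = b ∨ osign (f a) (f b) (f x) = osign (f a) (f b) (f j)}
  rw [← hf.mem_convexHull_image_iff] at hj ⊢
  have hsegment : segment ℝ (f a) (f b) ⊆ convexHull ℝ (f '' H) :=
    segment_subset_convexHull (Set.mem_image_of_mem f ⟨ha, Or.inl rfl⟩)
      (Set.mem_image_of_mem f ⟨hb, Or.inr (Or.inl rfl)⟩)
  refine mem_of_mem_convexHull_of_segment_inter_nonempty (convex_convexHull ℝ _)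
    ((Set.toFinite _).isCompact_convexHull ℝ).isClosed hj ?_
  rintro _ ⟨t, htK, rfl⟩
  by_cases htH : t ∈ H
  · exact ⟨f t, right_mem_segment ℝ _ _, subset_convexHull ℝ _ ⟨t, htH, rfl⟩⟩
  obtain ⟨hta, htb, hsign⟩ : t ≠ a ∧ t ≠ b ∧ osign (f a) (f b) (f t) ≠ osign (f a) (f b) (f j) :=
    by simpa [H, htK] using htH
  rcases segment_inter_nonempty_or_mem_convexHull (Real.mul_nonpos_of_sign_ne hsign.symm) with
    ⟨p, hpjt, hpab⟩ | hfa | hfb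
  · exact ⟨p, hpjt, hsegment hpab⟩
  · exact absurd (hf.mem_convexHull_triple_iff.1 hfa) (hsep t htK hta htb).1
  · exact absurd (hf.mem_convexHull_triple_iff.1 hfb) (hsep t htK hta htb).2

end IsRealization

namespace SameOrientationOn

variable {G : ConvexGeometry J} {f g : J → Fin 2 → ℝ}

lemma osign_eq_of_mem_cl (hf : IsRealization G f) (hg : IsRealization G g) {K : Set J}
    (hK : SameOrientationOn f g K) {j : J} (hj : j ∈ G.cl K) (hjK : j ∉ K) {a b : J}
    (ha : a ∈ K) (hb : b ∈ K) (hab : a ≠ b) :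
    osign (f a) (f b) (f j) = osign (g a) (g b) (g j) := by
  have haj : a ≠ j := fun h => hjK (h ▸ ha)
  have hbj : b ≠ j := fun h => hjK (h ▸ hb)
  by_cases hcase : ∃ t ∈ K, t ≠ a ∧ t ≠ b ∧ (a ∈ G.cl {j, b, t} ∨ b ∈ G.cl {j, a, t})
  · obtain ⟨t, htK, hta, htb, ht⟩ := hcase
    rw [hf.osign_eq_neg_of_mem_cl hab haj hbj hta.symm htb.symm ht,
      hg.osign_eq_neg_of_mem_cl hab haj hbj hta.symm htb.symm ht,
      hK a ha b hb t htK hab htb.symm hta.symm]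
  push Not at hcase
  have hgj := hg.mem_convexHull_image_iff.2 (hf.mem_cl_sameSide ha hb hj hcase)
  refine (Real.sign_eq_of_nonneg_sign_mul ?_ (hg.orientDet_ne_zero hab hbj haj)
    (hf.orientDet_ne_zero hab hbj haj)).symm
  refine nonneg_mul_orientDet_of_mem_convexHull hgj ?_
  rintro _ ⟨x, ⟨hxK, hx⟩, rfl⟩
  rcases eq_or_ne x a with rfl | hxa
  · simp
  rcases eq_or_ne x b with rfl | hxb
  · simp
  rw [← osign_eq_sign_orientDet, ← (hx.resolve_left hxa).resolve_left hxb,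
    hK a ha b hb x hxK hab hxb.symm hxa.symm]
  exact Real.sign_mul_nonneg _

theorem of_extremePoints (hf : IsRealization G f) (hg : IsRealization G g) (K : Set J)
    (hK : SameOrientationOn f g (G.extremePoints K)) : SameOrientationOn f g K := by
  induction K using WellFoundedLT.induction with
  | _ K ih =>
  by_cases hext : G.extremePoints K = K
  · rwa [hext] at hK
  obtain ⟨j, hjK, hj⟩ : ∃ j ∈ K, j ∈ G.cl (K \ {j}) := by
    by_contra! h
    exact hext (Set.Subset.antisymm (Set.sep_subset _ _) fun x hx => ⟨hx, h x hx⟩)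
  have hK' := ih (K \ {j}) (Set.sdiff_singleton_ssubset.2 hjK)
    (hK.mono (G.extremePoints_sdiff_singleton_subset hj))
  have := hK'.insert fun a ha b hb hab =>
    hK'.osign_eq_of_mem_cl hf hg hj (fun h => h.2 rfl) ha hb hab
  rwa [Set.insert_sdiff_singleton, Set.insert_eq_of_mem hjK] at this

end SameOrientationOn

theorem same_order_on_layer_same_order_type_general (G : ConvexGeometry J)
    (f g : J → (Fin 2 → ℝ)) (hf : IsRealization G f) (hg : IsRealization G g)
    (hL0 : ∀ a ∈ G.L0, ∀ b ∈ G.L0, ∀ c ∈ G.L0, a ≠ b → b ≠ c → a ≠ c →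
      osign (f a) (f b) (f c) = osign (g a) (g b) (g c)) :
    ∀ a b c : J, a ≠ b → b ≠ c → a ≠ c →
      osign (f a) (f b) (f c) = osign (g a) (g b) (g c) := by
  have hL0_eq : G.L0 = G.extremePoints Set.univ := by
    ext x
    simp [ConvexGeometry.extremePoints, ConvexGeometry.L0]
  have h := SameOrientationOn.of_extremePoints hf hg Set.univ (hL0_eq ▸ hL0)
  exact fun a b c => h a trivial b trivial c trivial

/-- Two realizations of a realizable convex 4-geometry inducing the same
clockwise circular order on the outermost layer induce the same order type on all of
`J`. -/
theorem same_order_on_layer_same_order_type (G : ConvexGeometry J) (h4 : G.Is4Geometry)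
    (f g : J → (Fin 2 → ℝ)) (hf : IsRealization G f) (hg : IsRealization G g)
    (hL0 : ∀ a ∈ G.L0, ∀ b ∈ G.L0, ∀ c ∈ G.L0, a ≠ b → b ≠ c → a ≠ c →
      osign (f a) (f b) (f c) = osign (g a) (g b) (g c)) :
    ∀ a b c : J, a ≠ b → b ≠ c → a ≠ c →
      osign (f a) (f b) (f c) = osign (g a) (g b) (g c) :=
  same_order_on_layer_same_order_type_general G f g hf hg hL0
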